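/- arXiv:1901.07834 — 3 statements merged into one kernel-verified Lean document; each statement's English description precedes it below -/
import Mathlib

section
/- Let n ≥ 1, let A be an n×n real matrix with A ≠ I, and let ‖·‖ be a consistent matrix norm. For every real a with 0 < a ≤ 1/(2‖A−I‖), the matrix t(A−I)+I is invertible for all t ∈ [0,a], and ‖(A−I) · ∫_0^a (t(A−I)+I)^{-1} dt‖ ≤ (3a/2)·‖A−I‖. -/
/-!
Write `B = A - 1` and `b = N B`, so that `a * b ≤ 1 / 2`. For `0 ≤ t ≤ a` we have `N (t • B) < 1`,
hence `t • B + 1` is invertible: a kernel vector `v` would give a matrix `V = v vᵀ` with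
`V = -(t • B) * V`, forcing `N V = 0`. The matrix `G t = B * (t • B + 1)⁻¹` satisfies
`G t = B - t • (B * G t)`, which gives first `N (G t) ≤ 2 b` and then `N (G t) ≤ b + 2 b² t`.
Since `N` is a norm on a finite-dimensional space it is convex and continuous, so Jensen's
inequality yields `N (∫ G) ≤ ∫ N ∘ G ≤ a b + a² b² ≤ 3 a b / 2`.
-/

open MeasureTheory

noncomputable def entryIntegral {n : ℕ} (f : ℝ → Matrix (Fin n) (Fin n) ℝ) (a b : ℝ) :
    Matrix (Fin n) (Fin n) ℝ :=
  Matrix.of fun i j => ∫ t in a..b, f t i j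

open Set Matrix

theorem Seminorm.map_integral_le_of_le {α E : Type*} [MeasurableSpace α] {μ : Measure α}
    [IsFiniteMeasure μ] [NormedAddCommGroup E] [NormedSpace ℝ E] [FiniteDimensional ℝ E]
    (p : Seminorm ℝ E) {f : α → E} {g : α → ℝ} (hf : Integrable f μ) (hg : Integrable g μ)
    (hfg : ∀ᵐ x ∂μ, p (f x) ≤ g x) :
    p (∫ x, f x ∂μ) ≤ ∫ x, g x ∂μ := by
  have hp : Continuous p := p.convexOn.locallyLipschitz.continuous
  obtain ⟨C, -, hC⟩ := p.bound_of_continuous_normedSpace hp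
  have hpf : Integrable (fun x => p (f x)) μ :=
    (hf.norm.const_mul C).mono' (hp.comp_aestronglyMeasurable hf.aestronglyMeasurable)
      (ae_of_all _ fun x => by rw [Real.norm_of_nonneg (apply_nonneg _ _)]; exact hC _)
  refine le_trans ?_ (integral_mono_ae hpf hg hfg)
  rcases eq_zero_or_neZero μ with rfl | _
  · simp
  have hJ := p.convexOn.map_average_le hp.continuousOn isClosed_univ
    (ae_of_all _ fun _ => mem_univ _) hf hpf
  rw [average_eq, average_eq, map_smul_eq_mul, smul_eq_mul, norm_inv,
    Real.norm_of_nonneg measureReal_nonneg] at hJ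
  exact le_of_mul_le_mul_left hJ (inv_pos.2 measureReal_univ_pos)

theorem Seminorm.map_entryIntegral_le_of_le {n : ℕ}
    (p : Seminorm ℝ (Matrix (Fin n) (Fin n) ℝ)) {f : ℝ → Matrix (Fin n) (Fin n) ℝ} {g : ℝ → ℝ}
    {a b : ℝ} (hab : a ≤ b)
    (hf : ∀ i j, IntervalIntegrable (fun t => f t i j) volume a b)
    (hg : IntervalIntegrable g volume a b) (hfg : ∀ t ∈ Ioc a b, p (f t) ≤ g t) :
    p (entryIntegral f a b) ≤ ∫ t in a..b, g t := by
  -- `Matrix` carries no global norm, the Pi type does (the sup norm); `p` is a seminorm on both.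
  let F : ℝ → Fin n → Fin n → ℝ := f
  have hFi : ∀ i, IntegrableOn (fun t => F t i) (Ioc a b) :=
    fun i => Integrable.of_eval fun j => (hf i j).1
  have hfF : entryIntegral f a b = ∫ t in Ioc a b, F t := by
    ext i j
    rw [eval_integral hFi, eval_integral fun j => (hf i j).1]
    exact intervalIntegral.integral_of_le hab
  rw [hfF, intervalIntegral.integral_of_le hab]
  exact p.map_integral_le_of_le (Integrable.of_eval hFi) hg.1
    (ae_restrict_of_forall_mem measurableSet_Ioc hfg)

theorem mul_entryIntegral {n : ℕ} (M : Matrix (Fin n) (Fin n) ℝ)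
    {f : ℝ → Matrix (Fin n) (Fin n) ℝ} {a b : ℝ}
    (hf : ∀ i j, IntervalIntegrable (fun t => f t i j) volume a b) :
    M * entryIntegral f a b = entryIntegral (fun t => M * f t) a b := by
  ext i j
  simp only [entryIntegral, mul_apply, of_apply]
  rw [intervalIntegral.integral_finsetSum fun k _ => (hf k j).const_mul (M i k)]
  simp only [intervalIntegral.integral_const_mul]

theorem intervalIntegral.integral_const_add_mul_id (a c d : ℝ) :
    ∫ t in (0)..a, (c + d * t) = c * a + d * a ^ 2 / 2 := by
  rw [integral_add intervalIntegrable_const (intervalIntegrable_id.const_mul _), integral_const,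
    integral_const_mul, integral_id, smul_eq_mul]
  ring

theorem ContinuousOn.intervalIntegrable_matrix_elem {m m' : Type*} {f : ℝ → Matrix m m' ℝ}
    {a b : ℝ} (hf : ContinuousOn f (uIcc a b)) (i : m) (j : m') :
    IntervalIntegrable (fun t => f t i j) volume a b :=
  ((continuous_id.matrix_elem i j).comp_continuousOn hf).intervalIntegrable

theorem ContinuousOn.matrix_inv {X m : Type*} [TopologicalSpace X] [Fintype m] [DecidableEq m]
    {f : X → Matrix m m ℝ} {s : Set X} (hf : ContinuousOn f s) (hunit : ∀ x ∈ s, IsUnit (f x)) :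
    ContinuousOn (fun x => (f x)⁻¹) s := fun x hx =>
  have hdet : (f x).det ≠ 0 := ((isUnit_iff_isUnit_det _).mp (hunit x hx)).ne_zero
  (continuousAt_matrix_inv _ (by rw [Ring.inverse_eq_inv']; exact continuousAt_inv₀ hdet))
    |>.comp_continuousWithinAt (hf x hx)

theorem Matrix.isUnit_add_one_of_seminorm_lt_one {m : Type*} [Fintype m] [DecidableEq m]
    (p : Seminorm ℝ (Matrix m m ℝ)) (hp_def : ∀ X, p X = 0 → X = 0)
    (hp_mul : ∀ X Y, p (X * Y) ≤ p X * p Y) {X : Matrix m m ℝ} (hX : p X < 1) :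
    IsUnit (X + 1) := by
  rw [← mulVec_injective_iff_isUnit]
  suffices hker : ∀ v, (X + 1) *ᵥ v = 0 → v = 0 from
    fun v w h => sub_eq_zero.mp (hker _ (by rw [mulVec_sub, h, sub_self]))
  intro v hv
  set V := vecMulVec v v
  have hV : X * V + V = 0 := by
    rw [← add_one_mul X V, mul_vecMulVec, hv, zero_vecMulVec]
  have hpV : p V ≤ p X * p V := by
    calc p V = p (-(X * V)) := by rw [← eq_neg_of_add_eq_zero_right hV]
      _ = p (X * V) := map_neg_eq_map p _
      _ ≤ p X * p V := hp_mul X V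
  have hV0 : V = 0 := hp_def V (by nlinarith [apply_nonneg p V])
  simpa [V] using hV0

theorem Matrix.seminorm_mul_inv_smul_add_one_le {m : Type*} [Fintype m] [DecidableEq m]
    (p : Seminorm ℝ (Matrix m m ℝ)) (hp_mul : ∀ X Y, p (X * Y) ≤ p X * p Y)
    {B : Matrix m m ℝ} {t : ℝ} (ht : 0 ≤ t) (htB : t * p B ≤ 1 / 2)
    (hunit : IsUnit (t • B + 1)) :
    p (B * (t • B + 1)⁻¹) ≤ p B + 2 * p B ^ 2 * t := by
  set G := B * (t • B + 1)⁻¹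
  have hG : G = B - t • (B * G) := by
    have h := mul_nonsing_inv (t • B + 1) ((isUnit_iff_isUnit_det _).mp hunit)
    calc G = B * ((t • B + 1) * (t • B + 1)⁻¹) - t • (B * G) := by
          simp only [G, Matrix.add_mul, Matrix.smul_mul, Matrix.mul_add, Matrix.mul_smul,
            one_mul]
          abel
      _ = B - t • (B * G) := by rw [h, mul_one]
  have hpG : p G ≤ p B + t * (p B * p G) := by
    calc p G = p (B - t • (B * G)) := by rw [← hG]
      _ ≤ p B + p (t • (B * G)) := map_sub_le_add p _ _
      _ = p B + t * p (B * G) := by rw [map_smul_eq_mul, Real.norm_of_nonneg ht]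
      _ ≤ p B + t * (p B * p G) := by gcongr; exact hp_mul B G
  have hpG2 : p G ≤ 2 * p B := by nlinarith [apply_nonneg p G, apply_nonneg p B]
  nlinarith [mul_le_mul_of_nonneg_left hpG2 (mul_nonneg ht (apply_nonneg p B))]

theorem stmt_0_general {n : ℕ} (A : Matrix (Fin n) (Fin n) ℝ)
    (N : Matrix (Fin n) (Fin n) ℝ → ℝ)
    (hN_def : ∀ X, N X = 0 ↔ X = 0)
    (hN_add : ∀ X Y, N (X + Y) ≤ N X + N Y)
    (hN_smul : ∀ (c : ℝ) (X), N (c • X) = |c| * N X)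
    (hN_mul : ∀ X Y, N (X * Y) ≤ N X * N Y)
    (a : ℝ) (ha0 : 0 < a) (ha : a ≤ 1 / (2 * N (A - 1))) :
    (∀ t ∈ Set.Icc (0 : ℝ) a, IsUnit (t • (A - 1) + 1)) ∧
      N ((A - 1) * entryIntegral (fun t => (t • (A - 1) + 1)⁻¹) 0 a) ≤
        3 * a / 2 * N (A - 1) := by
  let p : Seminorm ℝ (Matrix (Fin n) (Fin n) ℝ) := .of N hN_add hN_smul
  set B := A - 1
  change a ≤ 1 / (2 * p B) at ha
  change (∀ t ∈ Icc 0 a, _) ∧ p _ ≤ 3 * a / 2 * p B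
  have hab : a * p B ≤ 1 / 2 := by
    rcases (apply_nonneg p B).eq_or_lt with hb | hb
    · rw [← hb, mul_zero]; norm_num
    · rw [le_div_iff₀ (by positivity)] at ha; linarith
  have htB : ∀ t ∈ Icc 0 a, t * p B ≤ 1 / 2 := fun t ht =>
    (mul_le_mul_of_nonneg_right ht.2 (apply_nonneg p B)).trans hab
  have hunit : ∀ t ∈ Icc 0 a, IsUnit (t • B + 1) := fun t ht =>
    isUnit_add_one_of_seminorm_lt_one p (fun X => (hN_def X).1) hN_mul
      (by rw [map_smul_eq_mul, Real.norm_of_nonneg ht.1]; linarith [htB t ht])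
  have hcont : ContinuousOn (fun t => (t • B + 1)⁻¹) (uIcc 0 a) := by
    rw [uIcc_of_le ha0.le]
    exact ContinuousOn.matrix_inv (by fun_prop) hunit
  refine ⟨hunit, ?_⟩
  calc p (B * entryIntegral (fun t => (t • B + 1)⁻¹) 0 a)
      = p (entryIntegral (fun t => B * (t • B + 1)⁻¹) 0 a) := by
        rw [mul_entryIntegral B hcont.intervalIntegrable_matrix_elem]
    _ ≤ ∫ t in (0)..a, (p B + 2 * p B ^ 2 * t) :=
        p.map_entryIntegral_le_of_le ha0.le
          (continuousOn_const.mul hcont).intervalIntegrable_matrix_elem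
          (by apply Continuous.intervalIntegrable; fun_prop)
          fun t ht => seminorm_mul_inv_smul_add_one_le p hN_mul ht.1.le
            (htB t (Ioc_subset_Icc_self ht)) (hunit t (Ioc_subset_Icc_self ht))
    _ = p B * a + 2 * p B ^ 2 * a ^ 2 / 2 := intervalIntegral.integral_const_add_mul_id ..
    _ ≤ 3 * a / 2 * p B := by
        nlinarith [mul_le_mul_of_nonneg_left hab (mul_nonneg ha0.le (apply_nonneg p B))]

/-- Lemma 2.1: left-endpoint truncation bound. -/
theorem stmt_0 {n : ℕ} (hn : 1 ≤ n) (A : Matrix (Fin n) (Fin n) ℝ) (hA : A ≠ 1)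
    (N : Matrix (Fin n) (Fin n) ℝ → ℝ)
    (hN_def : ∀ X, N X = 0 ↔ X = 0)
    (hN_add : ∀ X Y, N (X + Y) ≤ N X + N Y)
    (hN_smul : ∀ (c : ℝ) (X), N (c • X) = |c| * N X)
    (hN_mul : ∀ X Y, N (X * Y) ≤ N X * N Y)
    (a : ℝ) (ha0 : 0 < a) (ha : a ≤ 1 / (2 * N (A - 1))) :
    (∀ t ∈ Set.Icc (0 : ℝ) a, IsUnit (t • (A - 1) + 1)) ∧
      N ((A - 1) * entryIntegral (fun t => (t • (A - 1) + 1)⁻¹) 0 a) ≤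
        3 * a / 2 * N (A - 1) :=
  stmt_0_general A N hN_def hN_add hN_smul hN_mul a ha0 ha
end

section
/- Let n ≥ 1, let A be an invertible n×n real matrix, and let ‖·‖ be a consistent matrix norm. If 2‖A^{-1}‖/(2‖A^{-1}‖+1) ≤ b < 1, then (A−I) · ∫_b^1 (t(A−I)+I)^{-1} dt = (A−I)A^{-1}·[ −log(b)·I + ∑_{k=1}^∞ A^{-k} · ∫_b^1 (1/t)·((t−1)/t)^k dt ], where the series on the right converges in the space of n×n matrices. -/
open MeasureTheory

/-!
For `t ∈ [b, 1]` one has `|(t - 1) / t| ≤ (1 - b) / b`, and the hypothesis on `b` forces `b > 0` and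
`(1 - b) / b * N A⁻¹ ≤ 1 / 2`. Hence, writing `t (A - 1) + 1 = t A (1 - ((t - 1) / t) A⁻¹)`, the
inverse is the Neumann series `∑ₖ t⁻¹ ((t - 1) / t)ᵏ A⁻¹ᵏ⁺¹`, with a geometric majorant that is
uniform in `t`. A consistent norm dominates every matrix entry, so dominated convergence,
applied entrywise, integrates the series termwise; the `k = 0` term contributes `-log b`, and
multiplying the remaining tail by `A` lowers each power of `A⁻¹` by one.
-/

structure IsConsistentNorm {m : Type*} [Fintype m] (N : Matrix m m ℝ → ℝ) : Prop where
  eq_zero_iff : ∀ X, N X = 0 ↔ X = 0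
  add_le : ∀ X Y, N (X + Y) ≤ N X + N Y
  smul_eq : ∀ (c : ℝ) X, N (c • X) = |c| * N X
  mul_le : ∀ X Y, N (X * Y) ≤ N X * N Y

namespace IsConsistentNorm

variable {m : Type*} [Fintype m] {N : Matrix m m ℝ → ℝ}

theorem nonneg (hN : IsConsistentNorm N) (X : Matrix m m ℝ) : 0 ≤ N X := by
  have h0 : N 0 = 0 := (hN.eq_zero_iff 0).2 rfl
  have hneg : N (-X) = N X := by simpa using hN.smul_eq (-1) X
  have := hN.add_le X (-X)
  rw [add_neg_cancel, h0, hneg] at this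
  linarith

theorem pos (hN : IsConsistentNorm N) {X : Matrix m m ℝ} (hX : X ≠ 0) : 0 < N X :=
  (hN.nonneg X).lt_of_ne fun h => hX ((hN.eq_zero_iff X).1 h.symm)

theorem pow_succ_le [DecidableEq m] (hN : IsConsistentNorm N) (X : Matrix m m ℝ) (k : ℕ) :
    N (X ^ (k + 1)) ≤ N X ^ (k + 1) := by
  induction k with
  | zero => simp
  | succ k ih =>
    calc N (X ^ (k + 2)) ≤ N (X ^ (k + 1)) * N X := pow_succ X (k + 1) ▸ hN.mul_le _ _
      _ ≤ N X ^ (k + 1) * N X := by gcongr; exact hN.nonneg X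
      _ = N X ^ (k + 2) := (pow_succ _ _).symm

theorem exists_abs_apply_le (hN : IsConsistentNorm N) (i j : m) :
    ∃ C, 0 ≤ C ∧ ∀ X, |X i j| ≤ C * N X := by
  classical
  have hE : ∀ a c : m, 0 < N (Matrix.single a c 1) := fun a c =>
    hN.pos fun h => one_ne_zero (α := ℝ) (by simpa using congrFun (congrFun h a) c)
  refine ⟨N (Matrix.single i i 1) * N (Matrix.single j j 1) / N (Matrix.single i j 1),
    by have := hE i i; have := hE j j; have := hE i j; positivity, fun X => ?_⟩
  have key : |X i j| * N (Matrix.single i j 1)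
      ≤ N (Matrix.single i i 1) * N (Matrix.single j j 1) * N X := by
    have hsingle : Matrix.single i i 1 * X * Matrix.single j j 1 = X i j • Matrix.single i j 1 := by
      simp [Matrix.smul_single]
    calc |X i j| * N (Matrix.single i j 1) = N (Matrix.single i i 1 * X * Matrix.single j j 1) := by
          rw [hsingle, hN.smul_eq]
      _ ≤ N (Matrix.single i i 1) * N X * N (Matrix.single j j 1) :=
          (hN.mul_le _ _).trans (by gcongr; exacts [hN.nonneg _, hN.mul_le _ _])
      _ = _ := by ring
  rwa [div_mul_eq_mul_div, le_div_iff₀ (hE i j)]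

theorem summable_of_le (hN : IsConsistentNorm N) {f : ℕ → Matrix m m ℝ} {g : ℕ → ℝ}
    (hg : Summable g) (hfg : ∀ k, N (f k) ≤ g k) : Summable f := by
  refine Pi.summable.2 fun i => Pi.summable.2 fun j => ?_
  obtain ⟨C, hC, hCX⟩ := hN.exists_abs_apply_le i j
  exact (hg.mul_left C).of_norm_bounded fun k => (hCX (f k)).trans (by gcongr; exact hfg k)

theorem summable_pow [DecidableEq m] (hN : IsConsistentNorm N) {X : Matrix m m ℝ}
    (hX : N X < 1) : Summable (X ^ ·) :=
  (summable_nat_add_iff 1).1 <| hN.summable_of_le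
    ((summable_nat_add_iff 1).2 (summable_geometric_of_lt_one (hN.nonneg X) hX))
    (hN.pow_succ_le X)

end IsConsistentNorm

theorem Matrix.hasSum_inv_smul_sub_one_add_one {m : Type*} [Fintype m] [DecidableEq m]
    {A : Matrix m m ℝ} (hA : IsUnit A) {t : ℝ} (ht : t ≠ 0)
    (hs : Summable fun k : ℕ => (((t - 1) / t) • A⁻¹) ^ k) :
    HasSum (fun k : ℕ => ((1 / t) * ((t - 1) / t) ^ k) • A⁻¹ ^ (k + 1))
      (t • (A - 1) + 1)⁻¹ := by
  have hd : IsUnit A.det := (Matrix.isUnit_iff_isUnit_det A).1 hA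
  set x := ((t - 1) / t) • A⁻¹
  have hfactor : t • (A - 1) + 1 = t • A * (1 - x) := by
    rw [Matrix.smul_mul, mul_sub, mul_one, Matrix.mul_smul, Matrix.mul_nonsing_inv A hd,
      smul_sub, smul_sub, smul_smul, mul_div_cancel₀ _ ht, sub_smul, one_smul]
    abel
  have hinv : (t • (A - 1) + 1)⁻¹ = (1 / t) • ((∑' k, x ^ k) * A⁻¹) := by
    refine Matrix.inv_eq_left_inv ?_
    rw [hfactor, Matrix.smul_mul, Matrix.smul_mul t A, Matrix.mul_smul, smul_smul,
      one_div_mul_cancel ht, one_smul, ← mul_assoc, mul_assoc _ A⁻¹, Matrix.nonsing_inv_mul A hd,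
      mul_one, hs.tsum_pow_mul_one_sub]
  rw [hinv]
  have hterm : ∀ k : ℕ,
      (1 / t) • (x ^ k * A⁻¹) = ((1 / t) * ((t - 1) / t) ^ k) • A⁻¹ ^ (k + 1) := fun k => by
    rw [smul_pow, Matrix.smul_mul, ← pow_succ, smul_smul]
  simpa only [hterm] using (hs.hasSum.mul_right A⁻¹).const_smul (1 / t)

theorem abs_sub_one_div_le {b t : ℝ} (hb : 0 < b) (hbt : b ≤ t) (ht : t ≤ 1) :
    |(t - 1) / t| ≤ (1 - b) / b := by
  have ht0 : 0 < t := hb.trans_le hbt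
  rw [abs_div, abs_of_pos ht0, abs_of_nonpos (by linarith), neg_sub]
  gcongr
  linarith

theorem hasSum_entryIntegral_inv {n : ℕ} {N : Matrix (Fin n) (Fin n) ℝ → ℝ}
    (hN : IsConsistentNorm N) {A : Matrix (Fin n) (Fin n) ℝ} (hA : IsUnit A) {b : ℝ}
    (hb0 : 0 < b) (hb1 : b ≤ 1) (hratio : (1 - b) / b * N A⁻¹ < 1) :
    HasSum (fun k : ℕ => (∫ t in b..1, 1 / t * ((t - 1) / t) ^ k) • A⁻¹ ^ (k + 1))
      (entryIntegral (fun t => (t • (A - 1) + 1)⁻¹) b 1) := by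
  set q := (1 - b) / b
  set r := N A⁻¹
  have hq : 0 ≤ q := div_nonneg (by linarith) hb0.le
  have hr : 0 ≤ r := hN.nonneg _
  have hpoint : ∀ t ∈ Set.Ioc b 1,
      HasSum (fun k : ℕ => (1 / t * ((t - 1) / t) ^ k) • A⁻¹ ^ (k + 1)) (t • (A - 1) + 1)⁻¹ := by
    rintro t ⟨hbt, ht1⟩
    refine Matrix.hasSum_inv_smul_sub_one_add_one hA (hb0.trans hbt).ne' (hN.summable_pow ?_)
    calc N (((t - 1) / t) • A⁻¹) = |(t - 1) / t| * r := hN.smul_eq _ _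
      _ ≤ q * r := by gcongr; exact abs_sub_one_div_le hb0 hbt.le ht1
      _ < 1 := hratio
  refine Pi.hasSum.2 fun i => Pi.hasSum.2 fun j => ?_
  obtain ⟨C, hC, hCX⟩ := hN.exists_abs_apply_le i j
  simp only [Matrix.smul_apply, smul_eq_mul, ← intervalIntegral.integral_mul_const]
  refine intervalIntegral.hasSum_integral_of_dominated_convergence
    (fun k _ => C / b * r * (q * r) ^ k) (fun k => by fun_prop) (fun k => ?_)
    (.of_forall fun _ _ => (summable_geometric_of_lt_one (by positivity) hratio).mul_left _)
    intervalIntegrable_const (.of_forall fun t ht => ?_)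
  · refine .of_forall fun t ht => ?_
    rw [Set.uIoc_of_le hb1] at ht
    have ht0 : 0 < t := hb0.trans ht.1
    calc ‖1 / t * ((t - 1) / t) ^ k * (A⁻¹ ^ (k + 1)) i j‖
        = 1 / t * |(t - 1) / t| ^ k * |(A⁻¹ ^ (k + 1)) i j| := by
          rw [Real.norm_eq_abs, abs_mul, abs_mul, abs_pow, abs_of_pos (one_div_pos.2 ht0)]
      _ ≤ 1 / b * q ^ k * (C * r ^ (k + 1)) := by
          gcongr
          · exact ht.1.le
          · exact abs_sub_one_div_le hb0 ht.1.le ht.2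
          · exact (hCX _).trans (by gcongr; exact hN.pow_succ_le _ _)
      _ = C / b * r * (q * r) ^ k := by clear_value q r; ring
  · rw [Set.uIoc_of_le hb1] at ht
    simpa only [Matrix.smul_apply, smul_eq_mul] using
      Pi.hasSum.1 (Pi.hasSum.1 (hpoint t ht) i) j

/-- Neumann-series expansion of the right-endpoint truncated integral. -/
theorem stmt_3 {n : ℕ} (hn : 1 ≤ n) (A : Matrix (Fin n) (Fin n) ℝ) (hA : IsUnit A)
    (N : Matrix (Fin n) (Fin n) ℝ → ℝ)
    (hN_def : ∀ X, N X = 0 ↔ X = 0)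
    (hN_add : ∀ X Y, N (X + Y) ≤ N X + N Y)
    (hN_smul : ∀ (c : ℝ) (X), N (c • X) = |c| * N X)
    (hN_mul : ∀ X Y, N (X * Y) ≤ N X * N Y)
    (b : ℝ) (hb1 : 2 * N A⁻¹ / (2 * N A⁻¹ + 1) ≤ b) (hb2 : b < 1) :
    (Summable fun k : ℕ =>
        (∫ t in b..(1 : ℝ), (1 / t) * ((t - 1) / t) ^ (k + 1)) • (A⁻¹) ^ (k + 1)) ∧
      (A - 1) * entryIntegral (fun t => (t • (A - 1) + 1)⁻¹) b 1 =
        (A - 1) * A⁻¹ *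
          ((-Real.log b) • (1 : Matrix (Fin n) (Fin n) ℝ) +
            ∑' k : ℕ,
              (∫ t in b..(1 : ℝ), (1 / t) * ((t - 1) / t) ^ (k + 1)) • (A⁻¹) ^ (k + 1)) := by
  have hN : IsConsistentNorm N := ⟨hN_def, hN_add, hN_smul, hN_mul⟩
  have hd : IsUnit A.det := (Matrix.isUnit_iff_isUnit_det A).1 hA
  have : Nonempty (Fin n) := ⟨⟨0, hn⟩⟩
  have hr : 0 < N A⁻¹ := hN.pos (Matrix.isUnit_nonsing_inv_iff.2 hA).ne_zero
  have hb0 : 0 < b := lt_of_lt_of_le (by positivity) hb1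
  have hratio : (1 - b) / b * N A⁻¹ < 1 := by
    rw [div_le_iff₀ (by positivity)] at hb1
    rw [div_mul_eq_mul_div, div_lt_one hb0]
    nlinarith
  have hlog : ∫ t in b..(1 : ℝ), 1 / t * ((t - 1) / t) ^ 0 = -Real.log b := by
    simp only [pow_zero, mul_one]
    rw [integral_one_div (by simp [Set.uIcc_of_le hb2.le, hb0.not_ge]), one_div, Real.log_inv]
  have htail := ((hasSum_nat_add_iff' 1).2
    (hasSum_entryIntegral_inv hN hA hb0 hb2.le hratio)).mul_left A
  simp only [Matrix.mul_smul, pow_succ' A⁻¹ (_ + 1), ← mul_assoc, Matrix.mul_nonsing_inv A hd,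
    one_mul, Finset.sum_range_one, zero_add, pow_one, hlog] at htail
  refine ⟨htail.summable, ?_⟩
  rw [htail.tsum_eq, mul_sub, Matrix.mul_smul, Matrix.mul_nonsing_inv A hd, add_sub_cancel,
    mul_assoc _ A⁻¹, ← mul_assoc A⁻¹, Matrix.nonsing_inv_mul A hd, one_mul]
end

section
/- Let n ≥ 1 and let A be an n×n real matrix whose complex eigenvalues all lie in ℂ∖(−∞,0]. Then the improper integral ∫_{-∞}^{∞} F_DE(x) dx exists and equals ∫_0^1 (t(A−I)+I)^{-1} dt, where F_DE(x) := cosh(x)·sech²(sinh(x))·[(1+tanh(sinh(x)))(A−I)+2I]^{-1}. Consequently (A−I)∫_{-∞}^{∞} F_DE(x) dx = (A−I)∫_0^1 (t(A−I)+I)^{-1} dt. -/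
open MeasureTheory

/-- Entrywise integral of a matrix-valued function over the whole real line. -/
noncomputable def lineIntegral {n : ℕ} (f : ℝ → Matrix (Fin n) (Fin n) ℝ) :
    Matrix (Fin n) (Fin n) ℝ :=
  Matrix.of fun i j => ∫ x : ℝ, f x i j

/-- The integrand of the double exponential transformation. -/
noncomputable def FDE {n : ℕ} (A : Matrix (Fin n) (Fin n) ℝ) (x : ℝ) :
    Matrix (Fin n) (Fin n) ℝ :=
  (Real.cosh x * (1 / Real.cosh (Real.sinh x)) ^ 2) •
    ((1 + Real.tanh (Real.sinh x)) • (A - 1) + (2 : Matrix (Fin n) (Fin n) ℝ))⁻¹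

/-! The substitution `t = (tanh (sinh x) + 1) / 2` maps `ℝ` bijectively onto `(0, 1)` with
`dt/dx = cosh x · sech² (sinh x) / 2`, and `(1 + tanh (sinh x))(A - I) + 2I = 2 (t(A - I) + I)`,
so `F_DE(x) dx` is exactly `(t(A - I) + I)⁻¹ dt`. The integrand in `t` is continuous on `[0, 1]`
because for `t > 0` we have `t(A - I) + I = -t (μ I - A)` with `μ = (t - 1)/t ≤ 0`, and a real
eigenvalue of `A` is also a complex one, hence positive. -/

open Set Real

theorem Real.hasDerivAt_tanh (y : ℝ) : HasDerivAt tanh ((1 / cosh y) ^ 2) y := by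
  have h := (hasDerivAt_sinh y).div (hasDerivAt_cosh y) (cosh_pos y).ne'
  rw [show sinh / cosh = tanh from funext fun y => (tanh_eq_sinh_div_cosh y).symm] at h
  refine h.congr_deriv ?_
  rw [div_pow, one_pow, ← cosh_sq_sub_sinh_sq y]
  ring

noncomputable def deSubst (x : ℝ) : ℝ := (tanh (sinh x) + 1) / 2

theorem hasDerivAt_deSubst (x : ℝ) :
    HasDerivAt deSubst (cosh x * (1 / cosh (sinh x)) ^ 2 / 2) x :=
  ((((hasDerivAt_tanh _).comp x (hasDerivAt_sinh x)).add_const 1).div_const 2).congr_deriv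
    (by ring)

theorem deSubst_injective : Function.Injective deSubst := fun a b hab =>
  sinh_injective <| tanh_injective <| by unfold deSubst at hab; linarith

theorem range_deSubst : range deSubst = Ioo 0 1 := by
  have h : range (tanh ∘ sinh) = Ioo (-1) 1 := by
    rw [range_comp, sinh_surjective.range_eq, tanh_bijOn.image_eq]
  have hd : deSubst = (fun u => (u + 1) / 2) ∘ tanh ∘ sinh := rfl
  rw [hd, range_comp, h]
  ext t
  simp only [mem_image, mem_Ioo]
  constructor
  · rintro ⟨u, ⟨hu₁, hu₂⟩, rfl⟩
    constructor <;> linarith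
  · rintro ⟨ht₀, ht₁⟩
    exact ⟨2 * t - 1, ⟨by linarith, by linarith⟩, by ring⟩

section ChangeOfVariables

variable {E : Type*} [NormedAddCommGroup E] [NormedSpace ℝ E] {φ φ' : ℝ → ℝ} {a b : ℝ}
  {g : ℝ → E}

theorem integrableOn_Ioo_iff_integrable_comp_smul_deriv (hφ : ∀ x, HasDerivAt φ (φ' x) x)
    (hφ' : ∀ x, 0 ≤ φ' x) (hinj : Function.Injective φ) (hrange : range φ = Ioo a b) :
    IntegrableOn g (Ioo a b) ↔ Integrable fun x => φ' x • g (φ x) := by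
  have h := integrableOn_image_iff_integrableOn_abs_deriv_smul MeasurableSet.univ
    (fun x _ => (hφ x).hasDerivWithinAt) hinj.injOn g
  simpa only [image_univ, hrange, abs_of_nonneg (hφ' _), integrableOn_univ] using h

theorem integral_comp_smul_deriv_eq_intervalIntegral (hφ : ∀ x, HasDerivAt φ (φ' x) x)
    (hφ' : ∀ x, 0 ≤ φ' x) (hinj : Function.Injective φ) (hrange : range φ = Ioo a b) :
    ∫ x, φ' x • g (φ x) = ∫ t in a..b, g t := by
  have hab : a ≤ b := by
    have h0 : φ 0 ∈ Ioo a b := hrange ▸ mem_range_self 0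
    exact h0.1.le.trans h0.2.le
  have h := integral_image_eq_integral_abs_deriv_smul MeasurableSet.univ
    (fun x _ => (hφ x).hasDerivWithinAt) hinj.injOn g
  simp only [image_univ, hrange, abs_of_nonneg (hφ' _), Measure.restrict_univ] at h
  rw [intervalIntegral.integral_of_le hab, integral_Ioc_eq_integral_Ioo, h]

end ChangeOfVariables

section Invertibility

variable {ι : Type*} [Fintype ι] [DecidableEq ι]

theorem Matrix.mem_spectrum_map_ofReal {A : Matrix ι ι ℝ} {μ : ℝ} (h : μ ∈ spectrum ℝ A) :
    (μ : ℂ) ∈ spectrum ℂ (A.map fun x => (x : ℂ)) := by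
  rw [Matrix.mem_spectrum_iff_isRoot_charpoly] at h ⊢
  have h' := h.map (f := Complex.ofRealHom)
  rwa [← Matrix.charpoly_map] at h'

theorem isUnit_smul_sub_one_add_one {A : Matrix ι ι ℝ} (hA : ∀ μ ∈ spectrum ℝ A, 0 < μ) {t : ℝ}
    (ht : t ∈ Icc 0 1) : IsUnit (t • (A - 1) + 1) := by
  rcases ht.1.eq_or_lt with rfl | ht₀
  · simp
  obtain ⟨μ, htμ⟩ : ∃ μ, t * μ = t - 1 := ⟨(t - 1) / t, mul_div_cancel₀ _ ht₀.ne'⟩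
  have hμ : μ ∉ spectrum ℝ A := fun h => by nlinarith [hA μ h, ht.2]
  have hshift : t • (A - 1) + 1 = (-t) • (algebraMap ℝ (Matrix ι ι ℝ) μ - A) := by
    rw [Algebra.algebraMap_eq_smul_one, smul_sub (-t), smul_smul, neg_mul, htμ]
    module
  rw [hshift]
  exact (spectrum.notMem_iff.mp hμ).smul (Units.mk0 (-t) (by linarith))

theorem continuousOn_inv_smul_sub_one_add_one {A : Matrix ι ι ℝ}
    (hA : ∀ μ ∈ spectrum ℝ A, 0 < μ) :
    ContinuousOn (fun t : ℝ => (t • (A - 1) + 1)⁻¹) (Icc 0 1) := fun t ht => by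
  have hdet : (t • (A - 1) + 1).det ≠ 0 :=
    ((Matrix.isUnit_iff_isUnit_det _).mp (isUnit_smul_sub_one_add_one hA ht)).ne_zero
  refine (continuousAt_matrix_inv _ ?_).comp_continuousWithinAt
    (by fun_prop : Continuous fun t : ℝ => t • (A - 1) + 1).continuousWithinAt
  rw [Ring.inverse_eq_inv']
  exact continuousAt_inv₀ hdet

end Invertibility

theorem FDE_eq_smul_inv {n : ℕ} {A : Matrix (Fin n) (Fin n) ℝ} (hA : ∀ μ ∈ spectrum ℝ A, 0 < μ)
    (x : ℝ) : FDE A x = (cosh x * (1 / cosh (sinh x)) ^ 2 / 2) • (deSubst x • (A - 1) + 1)⁻¹ := by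
  have hu := isUnit_smul_sub_one_add_one hA
    (Ioo_subset_Icc_self (range_deSubst ▸ mem_range_self x))
  have h2 : (1 + tanh (sinh x)) • (A - 1) + 2 = (2 : ℝ) • (deSubst x • (A - 1) + 1) := by
    rw [smul_add, smul_smul, two_smul ℝ (1 : Matrix (Fin n) (Fin n) ℝ), one_add_one_eq_two]
    congr 2
    unfold deSubst
    ring
  have : Invertible (2 : ℝ) := invertibleOfNonzero two_ne_zero
  rw [FDE, h2, Matrix.inv_smul _ 2 ((Matrix.isUnit_iff_isUnit_det _).mp hu), invOf_eq_inv,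
    smul_smul, ← div_eq_mul_inv]

theorem stmt_11_general {n : ℕ} (A : Matrix (Fin n) (Fin n) ℝ)
    (hspec : ∀ μ ∈ spectrum ℂ (A.map fun x => (x : ℂ)), ¬(μ.im = 0 ∧ μ.re ≤ 0)) :
    (∀ i j, Integrable (fun x => FDE A x i j)) ∧
      lineIntegral (FDE A) = entryIntegral (fun t => (t • (A - 1) + 1)⁻¹) 0 1 ∧
      (A - 1) * lineIntegral (FDE A) =
        (A - 1) * entryIntegral (fun t => (t • (A - 1) + 1)⁻¹) 0 1 := by
  have hA : ∀ μ ∈ spectrum ℝ A, 0 < μ := fun μ hμ => by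
    by_contra h
    exact hspec _ (Matrix.mem_spectrum_map_ofReal hμ) ⟨Complex.ofReal_im μ, by simpa using h⟩
  have hentry (i j : Fin n) (x : ℝ) : FDE A x i j =
      (cosh x * (1 / cosh (sinh x)) ^ 2 / 2) • (deSubst x • (A - 1) + 1)⁻¹ i j := by
    rw [FDE_eq_smul_inv hA x]
    rfl
  have hderiv_nonneg (x : ℝ) : 0 ≤ cosh x * (1 / cosh (sinh x)) ^ 2 / 2 := by positivity
  have hg (i j : Fin n) : IntegrableOn (fun t : ℝ => (t • (A - 1) + 1)⁻¹ i j) (Ioo 0 1) :=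
    ((continuous_apply_apply i j).comp_continuousOn
      (continuousOn_inv_smul_sub_one_add_one hA)).integrableOn_Icc.mono_set Ioo_subset_Icc_self
  have hline : lineIntegral (FDE A) = entryIntegral (fun t => (t • (A - 1) + 1)⁻¹) 0 1 := by
    ext i j
    simp only [lineIntegral, entryIntegral, Matrix.of_apply, hentry]
    exact integral_comp_smul_deriv_eq_intervalIntegral (g := fun t => (t • (A - 1) + 1)⁻¹ i j)
      hasDerivAt_deSubst hderiv_nonneg deSubst_injective range_deSubst
  refine ⟨fun i j => ?_, hline, by rw [hline]⟩
  simp only [hentry]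
  exact (integrableOn_Ioo_iff_integrable_comp_smul_deriv hasDerivAt_deSubst hderiv_nonneg
    deSubst_injective range_deSubst).mp (hg i j)

/-- The DE change of variables: `∫_{-∞}^{∞} F_DE = ∫_0^1 (t(A−I)+I)⁻¹ dt`. -/
theorem stmt_11 {n : ℕ} (hn : 1 ≤ n) (A : Matrix (Fin n) (Fin n) ℝ)
    (hspec : ∀ μ ∈ spectrum ℂ (A.map fun x => (x : ℂ)), ¬(μ.im = 0 ∧ μ.re ≤ 0)) :
    (∀ i j, Integrable (fun x => FDE A x i j)) ∧
      lineIntegral (FDE A) = entryIntegral (fun t => (t • (A - 1) + 1)⁻¹) 0 1 ∧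
      (A - 1) * lineIntegral (FDE A) =
        (A - 1) * entryIntegral (fun t => (t • (A - 1) + 1)⁻¹) 0 1 :=
  stmt_11_general A hspec
end
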